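/- For every m ≥ 3, the regular polygon P_m in R^2 with outer facet normals u_j = (cos(2πj/m), sin(2πj/m)) and all facet lengths equal to 2π/m has the same surface tensors as the unit disc B^2 up to rank m − 1. -/

import Mathlib

/-!
Both measures are pushed to the circle, so the claim says that the equal-weight quadrature
`f ↦ (2π/m) ∑_{j<m} f(2πj/m)` integrates `cos^a θ sin^b θ` exactly over `[0, 2π]` when `a + b < m`.
This monomial is a trigonometric polynomial of degree `a + b`, i.e. a combination of the
characters `e^{ikθ}` with `|k| ≤ a + b`. For `k = 0` both sides equal `2π`; for `0 < |k| < m`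
the integral vanishes and so does the quadrature, being a geometric sum over the nontrivial
`m`-th root of unity `e^{2πik/m}`.
-/

open MeasureTheory Metric Real Filter
open scoped InnerProductSpace ENNReal NNReal Topology

noncomputable section

abbrev En (n : ℕ) := EuclideanSpace ℝ (Fin n)

open Complex in
def fourierExp (k : ℤ) : ℝ → ℂ := fun θ => exp (k * θ * I)

lemma fourierExp_zero : fourierExp 0 = 1 := by
  ext θ
  simp [fourierExp]

lemma fourierExp_add (k l : ℤ) : fourierExp (k + l) = fourierExp k * fourierExp l := by
  ext θ
  simp only [fourierExp, Pi.mul_apply, ← Complex.exp_add]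
  push_cast
  ring_nf

lemma continuous_fourierExp (k : ℤ) : Continuous (fourierExp k) := by
  unfold fourierExp
  fun_prop

def trigPoly (n : ℕ) : Submodule ℂ (ℝ → ℂ) :=
  Submodule.span ℂ (fourierExp '' {k | k.natAbs ≤ n})

lemma fourierExp_mem_trigPoly {k : ℤ} {n : ℕ} (hk : k.natAbs ≤ n) : fourierExp k ∈ trigPoly n :=
  Submodule.subset_span ⟨k, hk, rfl⟩

lemma trigPoly_mul_le (n p : ℕ) : trigPoly n * trigPoly p ≤ trigPoly (n + p) := by
  rw [trigPoly, trigPoly, Submodule.span_mul_span]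
  refine Submodule.span_le.2 ?_
  rintro _ ⟨_, ⟨k, hk, rfl⟩, _, ⟨l, hl, rfl⟩, rfl⟩
  show fourierExp k * fourierExp l ∈ _
  rw [← fourierExp_add]
  exact fourierExp_mem_trigPoly ((Int.natAbs_add_le k l).trans (add_le_add hk hl))

lemma pow_mem_trigPoly {f : ℝ → ℂ} (hf : f ∈ trigPoly 1) : ∀ n, f ^ n ∈ trigPoly n
  | 0 => by
    rw [pow_zero, ← fourierExp_zero]
    exact fourierExp_mem_trigPoly le_rfl
  | n + 1 => by
    rw [pow_succ]
    exact trigPoly_mul_le n 1 (Submodule.mul_mem_mul (pow_mem_trigPoly hf n) hf)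

lemma cos_mem_trigPoly_one : (fun θ : ℝ => Complex.cos θ) ∈ trigPoly 1 := by
  have h : (fun θ : ℝ => Complex.cos θ) = (2⁻¹ : ℂ) • (fourierExp 1 + fourierExp (-1)) := by
    ext θ
    simp only [Complex.cos, Pi.smul_apply, Pi.add_apply, fourierExp, Int.cast_one, Int.cast_neg,
      one_mul, neg_mul, smul_eq_mul]
    ring_nf
  rw [h]
  exact Submodule.smul_mem _ _
    (add_mem (fourierExp_mem_trigPoly le_rfl) (fourierExp_mem_trigPoly le_rfl))

lemma sin_mem_trigPoly_one : (fun θ : ℝ => Complex.sin θ) ∈ trigPoly 1 := by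
  have h : (fun θ : ℝ => Complex.sin θ) = (Complex.I / 2) • (fourierExp (-1) - fourierExp 1) := by
    ext θ
    simp only [Complex.sin, Pi.smul_apply, Pi.sub_apply, fourierExp, Int.cast_one, Int.cast_neg,
      one_mul, neg_mul, smul_eq_mul]
    ring_nf
  rw [h]
  exact Submodule.smul_mem _ _
    (sub_mem (fourierExp_mem_trigPoly le_rfl) (fourierExp_mem_trigPoly le_rfl))

lemma cos_pow_mul_sin_pow_mem_trigPoly (a b : ℕ) :
    (fun θ : ℝ => Complex.cos θ ^ a * Complex.sin θ ^ b) ∈ trigPoly (a + b) :=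
  trigPoly_mul_le a b (Submodule.mul_mem_mul (pow_mem_trigPoly cos_mem_trigPoly_one a)
    (pow_mem_trigPoly sin_mem_trigPoly_one b))

lemma fourierExp_two_pi_mul_div (m : ℕ) (k : ℤ) (j : ℕ) :
    fourierExp k (2 * π * j / m) = (Complex.exp (2 * π * Complex.I / m) ^ k) ^ j := by
  rw [fourierExp, ← Complex.exp_int_mul, ← Complex.exp_nat_mul]
  push_cast
  ring_nf

lemma sum_fourierExp_two_pi_mul_div {m : ℕ} {k : ℤ} (hk : ¬(m : ℤ) ∣ k) :
    ∑ j ∈ Finset.range m, fourierExp k (2 * π * j / m) = 0 := by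
  rcases eq_or_ne m 0 with rfl | hm
  · simp
  set ζ := Complex.exp (2 * π * Complex.I / m)
  have hζ : IsPrimitiveRoot ζ m := Complex.isPrimitiveRoot_exp m hm
  have hζk : ζ ^ k ≠ 1 := fun h => hk ((hζ.zpow_eq_one_iff_dvd k).1 h)
  have hζkm : (ζ ^ k) ^ m = 1 := by
    rw [← zpow_natCast, ← zpow_mul, mul_comm k, zpow_mul, zpow_natCast, hζ.pow_eq_one, one_zpow]
  simp only [fourierExp_two_pi_mul_div]
  rw [geom_sum_eq hζk, hζkm, sub_self, zero_div]

lemma integral_fourierExp {k : ℤ} (hk : k ≠ 0) : ∫ θ in (0 : ℝ)..2 * π, fourierExp k θ = 0 := by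
  have hc : (k : ℂ) * Complex.I ≠ 0 := mul_ne_zero (Int.cast_ne_zero.2 hk) Complex.I_ne_zero
  simp only [fourierExp, mul_right_comm _ _ Complex.I]
  rw [integral_exp_mul_complex hc]
  have h : (k : ℂ) * Complex.I * ((2 * π : ℝ) : ℂ) = k * (2 * π * Complex.I) := by
    push_cast
    ring
  rw [h, Complex.exp_int_mul_two_pi_mul_I]
  simp

/-- The integral of `f(θ)` against the surface area measure of the regular `m`-gon `P_m`. -/
def polygonQuadrature (m : ℕ) (f : ℝ → ℂ) : ℂ :=
  (2 * π / m) * ∑ j ∈ Finset.range m, f (2 * π * j / m)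

lemma polygonQuadrature_fourierExp {m : ℕ} {k : ℤ} (hk : k.natAbs < m) :
    polygonQuadrature m (fourierExp k) = ∫ θ in (0 : ℝ)..2 * π, fourierExp k θ := by
  rcases eq_or_ne k 0 with rfl | hk0
  · have hm : (m : ℂ) ≠ 0 := by exact_mod_cast (by omega : m ≠ 0)
    simp only [polygonQuadrature, fourierExp_zero, Pi.one_apply, Finset.sum_const,
      Finset.card_range, nsmul_eq_mul, mul_one, intervalIntegral.integral_const, sub_zero,
      Complex.real_smul, Complex.ofReal_mul, Complex.ofReal_ofNat]
    field_simp
  · have hdvd : ¬(m : ℤ) ∣ k := fun h => by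
      have := Int.natAbs_le_of_dvd_ne_zero h hk0
      omega
    rw [polygonQuadrature, sum_fourierExp_two_pi_mul_div hdvd, integral_fourierExp hk0, mul_zero]

lemma polygonQuadrature_eq_integral {m n : ℕ} (hnm : n < m) {f : ℝ → ℂ} (hf : f ∈ trigPoly n) :
    polygonQuadrature m f = ∫ θ in (0 : ℝ)..2 * π, f θ := by
  suffices IntervalIntegrable f volume 0 (2 * π) ∧
      polygonQuadrature m f = ∫ θ in (0 : ℝ)..2 * π, f θ from this.2
  induction hf using Submodule.span_induction with
  | mem f hf =>
    obtain ⟨k, hk, rfl⟩ := hf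
    exact ⟨(continuous_fourierExp k).intervalIntegrable _ _,
      polygonQuadrature_fourierExp (lt_of_le_of_lt hk hnm)⟩
  | zero => exact ⟨IntervalIntegrable.zero, by simp [polygonQuadrature]⟩
  | add f g _ _ hf hg =>
    refine ⟨hf.1.add hg.1, ?_⟩
    simp only [Pi.add_apply]
    rw [intervalIntegral.integral_add hf.1 hg.1, ← hf.2, ← hg.2]
    simp only [polygonQuadrature, Pi.add_apply, Finset.sum_add_distrib, mul_add]
  | smul c f _ hf =>
    refine ⟨hf.1.const_mul c, ?_⟩
    simp only [Pi.smul_apply, smul_eq_mul, intervalIntegral.integral_const_mul, ← hf.2,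
      polygonQuadrature, ← Finset.mul_sum]
    ring

lemma sum_cos_pow_mul_sin_pow_eq_integral {m a b : ℕ} (hab : a + b < m) :
    (2 * π / m) * ∑ j ∈ Finset.range m, cos (2 * π * j / m) ^ a * sin (2 * π * j / m) ^ b
      = ∫ θ in (0 : ℝ)..2 * π, cos θ ^ a * sin θ ^ b := by
  apply Complex.ofReal_injective
  rw [← intervalIntegral.integral_ofReal]
  have h := polygonQuadrature_eq_integral hab (cos_pow_mul_sin_pow_mem_trigPoly a b)
  rw [polygonQuadrature] at h
  push_cast at h ⊢
  exact h

lemma integral_finset_sum_smul_dirac {α ι E : Type*} [MeasurableSpace α]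
    [MeasurableSingletonClass α] [NormedAddCommGroup E] [NormedSpace ℝ E] [CompleteSpace E]
    (s : Finset ι) {c : ℝ≥0∞} (hc : c ≠ ∞) (x : ι → α) (f : α → E) :
    ∫ y, f y ∂(∑ j ∈ s, c • Measure.dirac (x j)) = c.toReal • ∑ j ∈ s, f (x j) := by
  rw [integral_finsetSum_measure fun j _ => (integrable_dirac enorm_lt_top).smul_measure hc,
    Finset.smul_sum]
  simp only [integral_smul_measure, integral_dirac]

lemma integral_map_restrict_Ico {β E : Type*} [MeasurableSpace β] [NormedAddCommGroup E]
    [NormedSpace ℝ E] {φ : ℝ → β} (hφ : Measurable φ) {f : β → E} (hf : StronglyMeasurable f)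
    {a b : ℝ} (hab : a ≤ b) :
    ∫ y, f y ∂(Measure.map φ (volume.restrict (Set.Ico a b))) = ∫ θ in a..b, f (φ θ) := by
  rw [integral_map hφ.aemeasurable hf.aestronglyMeasurable, integral_Ico_eq_integral_Ioo,
    ← integral_Ioc_eq_integral_Ioo, intervalIntegral.integral_of_le hab]

theorem stmt4 (m : ℕ) (hm : 3 ≤ m)
    (u : Fin m → En 2)
    (hu : ∀ j : Fin m, u j = WithLp.toLp 2 (fun i =>
      if i = 0 then Real.cos (2 * π * ((j : ℕ) : ℝ) / m)
      else Real.sin (2 * π * ((j : ℕ) : ℝ) / m)))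
    (μP μB : Measure (En 2))
    (hμP : μP = ∑ j, ENNReal.ofReal (2 * π / m) • Measure.dirac (u j))
    (hμB : μB = Measure.map
      (fun θ : ℝ => (WithLp.toLp 2 (fun i => if i = 0 then Real.cos θ else Real.sin θ) : En 2))
      (volume.restrict (Set.Ico (0 : ℝ) (2 * π)))) :
    ∀ i₁ i₂ : ℕ, i₁ + i₂ ≤ m - 1 →
      ∫ x, (x 0) ^ i₁ * (x 1) ^ i₂ ∂μP = ∫ x, (x 0) ^ i₁ * (x 1) ^ i₂ ∂μB := by
  intro a b hab
  have hcircle : Measurable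
      (fun θ : ℝ => (WithLp.toLp 2 (fun i => if i = 0 then Real.cos θ else Real.sin θ) : En 2)) :=
    ((PiLp.continuous_toLp 2 _).comp (continuous_pi fun i => by split_ifs <;> fun_prop)).measurable
  have hmonomial : StronglyMeasurable fun x : En 2 => x 0 ^ a * x 1 ^ b := by fun_prop
  rw [hμP, hμB, integral_finset_sum_smul_dirac _ ENNReal.ofReal_ne_top,
    integral_map_restrict_Ico hcircle hmonomial (by positivity),
    ENNReal.toReal_ofReal (by positivity)]
  simp only [hu, smul_eq_mul, ↓reduceIte, Fin.isValue, one_ne_zero]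
  rw [Fin.sum_univ_eq_sum_range (fun j => cos (2 * π * j / m) ^ a * sin (2 * π * j / m) ^ b)]
  exact sum_cos_pow_mul_sin_pow_eq_integral (by omega)
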